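/- arXiv:2101.02622 — 2 statements merged into one kernel-verified Lean document; each statement's English description precedes it below -/
import Mathlib

section
/- Let E, F be matrix ordered operator spaces and φ : E → F completely contractive and completely positive. Then the unitization φ♯ : E♯ → F♯ defined by φ♯(x,α) = (φ(x),α) is unital and completely positive. Moreover, if φ is a completely isometric complete order isomorphism then φ♯ is a unital complete order isomorphism. -/
/-!
Precomposing with `φ` turns a completely contractive completely positive map `ψ : F → Mₙ` into
one on `E`, and `φ` commutes with scalar conjugation; so each test defining positivity of
`(φₙ(x), α)` in `F♯` is one of the tests defining positivity of `(x, α)` in `E♯`. A completely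
isometric complete order isomorphism has an inverse of the same kind, which gives the converse.
-/

open scoped ComplexOrder

abbrev Mat (n : ℕ) := Matrix (Fin n) (Fin n) ℂ
abbrev MatE (E : Type*) (n : ℕ) := Matrix (Fin n) (Fin n) E

noncomputable def opNorm {m : Type*} [Fintype m] [DecidableEq m] (A : Matrix m m ℂ) : ℝ :=
  ‖Matrix.toEuclideanCLM (𝕜 := ℂ) A‖

section MOOS
variable (E : Type*) [AddCommGroup E] [Module ℂ E] [StarAddMonoid E] [StarModule ℂ E]

/-- Scalar conjugation `A x A*` of a matrix over `E` by a scalar matrix `A`. -/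
def scalarConj {m n : ℕ} (A : Matrix (Fin m) (Fin n) ℂ) (x : MatE E n) : MatE E m :=
  fun i j => ∑ k, ∑ l, (A i k * star (A j l)) • x k l

/-- A matrix ordered operator space structure on `E`: matrix norms and matrix cones. -/
structure MOOS where
  matNorm : ∀ n : ℕ, MatE E n → ℝ
  pos : ∀ n : ℕ, Set (MatE E n)
  pos_selfadj : ∀ n : ℕ, ∀ x ∈ pos n, ∀ i j, star (x i j) = x j i
  pos_cap_neg : ∀ n : ℕ, ∀ x ∈ pos n, -x ∈ pos n → x = 0
  pos_conj : ∀ m n : ℕ, ∀ A : Matrix (Fin m) (Fin n) ℂ, ∀ x ∈ pos n,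
      scalarConj E A x ∈ pos m

variable {E}

/-- The amplification `φₖ : Mₖ(E) → Mₖ(M_d)` of a linear map `φ : E → M_d`. -/
def amp {d : ℕ} (φ : E →ₗ[ℂ] Mat d) (k : ℕ) (x : MatE E k) :
    Matrix (Fin k × Fin d) (Fin k × Fin d) ℂ :=
  fun p q => φ (x p.1 q.1) p.2 q.2

/-- `φ : E → M_d` is completely contractive and completely positive. -/
noncomputable def IsCCP (M : MOOS E) {d : ℕ} (φ : E →ₗ[ℂ] Mat d) : Prop :=
  (∀ k : ℕ, ∀ x ∈ M.pos k, (amp φ k x).PosSemidef) ∧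
  (∀ (k : ℕ) (x : MatE E k), opNorm (amp φ k x) ≤ M.matNorm k x)

/-- The matrix cones of the partial unitization `E♯ = E ⊕ ℂ`:
`(x, α)` is positive iff `α ≥ 0` and `φ(α_ε^{-1/2} x α_ε^{-1/2}) ≥ -1` for every
`ε > 0` and every completely contractive completely positive `φ : E → Mₙ`. -/
noncomputable def sharpPos (M : MOOS E) (n : ℕ) : Set (MatE E n × Mat n) :=
  { p | p.2.PosSemidef ∧
    ∀ ε : ℝ, 0 < ε → ∀ β : Mat n, β.PosSemidef → β * β = p.2 + (ε : ℂ) • 1 →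
      ∀ φ : E →ₗ[ℂ] Mat n, IsCCP M φ →
        ((amp φ n (scalarConj E β⁻¹ p.1)) + 1).PosSemidef }

end MOOS

/-- A completely contractive completely positive map between matrix ordered operator spaces. -/
def IsCCPmap {E F : Type*} [AddCommGroup E] [Module ℂ E] [StarAddMonoid E] [StarModule ℂ E]
    [AddCommGroup F] [Module ℂ F] [StarAddMonoid F] [StarModule ℂ F]
    (M : MOOS E) (N : MOOS F) (φ : E →ₗ[ℂ] F) : Prop :=
  (∀ (n : ℕ) (x : MatE E n), x ∈ M.pos n → x.map φ ∈ N.pos n) ∧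
  (∀ (n : ℕ) (x : MatE E n), N.matNorm n (x.map φ) ≤ M.matNorm n x)

section Unitization

variable {E F : Type*} [AddCommGroup E] [Module ℂ E] [StarAddMonoid E] [StarModule ℂ E]
    [AddCommGroup F] [Module ℂ F] [StarAddMonoid F] [StarModule ℂ F]

omit [StarAddMonoid E] [StarModule ℂ E] [StarAddMonoid F] [StarModule ℂ F] in
lemma scalarConj_map (φ : E →ₗ[ℂ] F) {m n : ℕ} (A : Matrix (Fin m) (Fin n) ℂ) (x : MatE E n) :
    (scalarConj E A x).map φ = scalarConj F A (x.map φ) := by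
  ext i j
  simp [scalarConj, map_sum, map_smul]

lemma IsCCP.comp {M : MOOS E} {N : MOOS F} {φ : E →ₗ[ℂ] F} {d : ℕ} {ψ : F →ₗ[ℂ] Mat d}
    (hψ : IsCCP N ψ) (hφ : IsCCPmap M N φ) : IsCCP M (ψ.comp φ) :=
  ⟨fun k x hx => hψ.1 k (x.map φ) (hφ.1 k x hx),
    fun k x => (hψ.2 k (x.map φ)).trans (hφ.2 k x)⟩

lemma IsCCPmap.map_mem_sharpPos {M : MOOS E} {N : MOOS F} {φ : E →ₗ[ℂ] F}
    (hφ : IsCCPmap M N φ) {n : ℕ} {x : MatE E n} {α : Mat n} (h : (x, α) ∈ sharpPos M n) :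
    (x.map φ, α) ∈ sharpPos N n := by
  refine ⟨h.1, fun ε hε β hβ hββ ψ hψ => ?_⟩
  rw [← scalarConj_map]
  exact h.2 ε hε β hβ hββ (ψ.comp φ) (hψ.comp hφ)

lemma IsCCPmap.of_linearEquiv {M : MOOS E} {N : MOOS F} (e : E ≃ₗ[ℂ] F)
    (hnorm : ∀ (n : ℕ) (x : MatE E n), N.matNorm n (x.map e) = M.matNorm n x)
    (hpos : ∀ (n : ℕ) (x : MatE E n), x ∈ M.pos n ↔ x.map e ∈ N.pos n) :
    IsCCPmap M N (e : E →ₗ[ℂ] F) :=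
  ⟨fun n x hx => (hpos n x).1 hx, fun n x => (hnorm n x).le⟩

lemma IsCCPmap.of_linearEquiv_symm {M : MOOS E} {N : MOOS F} (e : E ≃ₗ[ℂ] F)
    (hnorm : ∀ (n : ℕ) (x : MatE E n), N.matNorm n (x.map e) = M.matNorm n x)
    (hpos : ∀ (n : ℕ) (x : MatE E n), x ∈ M.pos n ↔ x.map e ∈ N.pos n) :
    IsCCPmap N M (e.symm : F →ₗ[ℂ] E) := by
  have map_symm_map (n : ℕ) (y : MatE F n) : (y.map e.symm).map e = y := by
    ext; simp
  refine ⟨fun n y hy => ?_, fun n y => ?_⟩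
  · rw [LinearEquiv.coe_coe, hpos, map_symm_map]
    exact hy
  · rw [LinearEquiv.coe_coe, ← hnorm, map_symm_map]

end Unitization

theorem stmt_6 {E F : Type*} [AddCommGroup E] [Module ℂ E] [StarAddMonoid E] [StarModule ℂ E]
    [AddCommGroup F] [Module ℂ F] [StarAddMonoid F] [StarModule ℂ F]
    (M : MOOS E) (N : MOOS F) (φ : E →ₗ[ℂ] F) (hφ : IsCCPmap M N φ) :
    -- φ♯ is unital
    ((LinearMap.prodMap φ (LinearMap.id : ℂ →ₗ[ℂ] ℂ)) ((0 : E), (1 : ℂ)) = ((0 : F), (1 : ℂ))) ∧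
    -- φ♯ is completely positive
    (∀ (n : ℕ) (x : MatE E n) (α : Mat n),
        (x, α) ∈ sharpPos M n → (x.map φ, α) ∈ sharpPos N n) ∧
    -- if φ is a completely isometric complete order isomorphism, then φ♯ is a
    -- unital complete order isomorphism
    (∀ e : E ≃ₗ[ℂ] F,
      (e : E →ₗ[ℂ] F) = φ →
      (∀ (n : ℕ) (x : MatE E n), N.matNorm n (x.map e) = M.matNorm n x) →
      (∀ (n : ℕ) (x : MatE E n), x ∈ M.pos n ↔ x.map e ∈ N.pos n) →
      ∀ (n : ℕ) (x : MatE E n) (α : Mat n),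
        (x, α) ∈ sharpPos M n ↔ (x.map e, α) ∈ sharpPos N n) := by
  refine ⟨by simp, fun n x α => hφ.map_mem_sharpPos, fun e _ hnorm hpos n x α => ⟨?_, ?_⟩⟩
  · exact (IsCCPmap.of_linearEquiv e hnorm hpos).map_mem_sharpPos
  · intro h
    have := (IsCCPmap.of_linearEquiv_symm e hnorm hpos).map_mem_sharpPos h
    have map_map_symm : (x.map e).map e.symm = x := by
      ext; simp
    rwa [LinearEquiv.coe_coe, map_map_symm] at this
end

section
/- Let K be a compact nc convex set and X ⊆ K a subset. Define X⊥ = {a ∈ A(K) : a(x) = 0 for all x ∈ X} and for Q ⊆ A(K), Q⊥ = {x ∈ K : a(x) = 0 for all a ∈ Q}. Then X⊥⊥ = Y ∩ K where Y is the closed nc convex hull in M(A(K)*) of the union of the linear spans of the X_n. -/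
open Matrix

/-- nc points at level `n` over the space `V` (thought of as `A(K)`):
elements of `Mₙ(V*)`, i.e. linear maps `V → Mₙ`. -/
abbrev NCPt (V : Type*) [AddCommGroup V] [Module ℂ V] (n : ℕ) :=
  V →ₗ[ℂ] Matrix (Fin n) (Fin n) ℂ

section
variable {V : Type*} [AddCommGroup V] [Module ℂ V]

/-- Compression `α* x α` of an nc point by a scalar matrix `α`. -/
noncomputable def conjPt {p n : ℕ} (A : Matrix (Fin p) (Fin n) ℂ) (x : NCPt V p) : NCPt V n where
  toFun v := Aᴴ * x v * A
  map_add' u v := by simp [map_add, Matrix.mul_add, Matrix.add_mul]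
  map_smul' c v := by simp [_root_.map_smul, Matrix.mul_smul, Matrix.smul_mul]

/-- A (finite) nc convex combination `Σ αᵢ* xᵢ αᵢ`. -/
noncomputable def ncCombo {n k : ℕ} (ns : Fin k → ℕ) (xs : ∀ i, NCPt V (ns i))
    (αs : ∀ i, Matrix (Fin (ns i)) (Fin n) ℂ) : NCPt V n :=
  ∑ i, conjPt (αs i) (xs i)

/-- The topology of point-weak* (pointwise) convergence on nc points. -/
noncomputable def lmTop (V : Type*) [AddCommGroup V] [Module ℂ V] (n : ℕ) :
    TopologicalSpace (NCPt V n) :=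
  TopologicalSpace.induced (fun f => (f : V → Matrix (Fin n) (Fin n) ℂ)) Pi.topologicalSpace

/-- A graded family is closed under nc convex combinations. -/
def ClosedUnderNCCombos (Y : ∀ n : ℕ, Set (NCPt V n)) : Prop :=
  ∀ (n k : ℕ) (ns : Fin k → ℕ) (xs : ∀ i, NCPt V (ns i))
    (αs : ∀ i, Matrix (Fin (ns i)) (Fin n) ℂ),
    (∀ i, xs i ∈ Y (ns i)) → (∑ i, (αs i)ᴴ * αs i) = 1 → ncCombo ns xs αs ∈ Y n

/-- A compact nc convex set over `V`. -/
def IsCompactNCConvex (K : ∀ n : ℕ, Set (NCPt V n)) : Prop :=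
  (∀ n, @IsCompact _ (lmTop V n) (K n)) ∧ ClosedUnderNCCombos K

/-- The closed nc convex hull of a graded family. -/
def ncClosedConvexHull (X : ∀ n : ℕ, Set (NCPt V n)) : ∀ n : ℕ, Set (NCPt V n) :=
  fun n =>
    { x | ∀ Y : ∀ m : ℕ, Set (NCPt V m),
        (∀ m, X m ⊆ Y m) → (∀ m, @IsClosed _ (lmTop V m) (Y m)) →
        ClosedUnderNCCombos Y → x ∈ Y n }

end

/-! `X⊥⊥` is a pointwise-closed graded family of subspaces, closed under nc convex combinations
and containing the spans of the `Xₘ`, so it contains their closed nc convex hull. Conversely, a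
closed nc convex `Y` containing the spans contains every finite sum of compressions `β* y β` with
`y ∈ Xₘ`: padding with the point `0` makes such a sum an nc convex combination. A functional that
depends on finitely many evaluations has the form `w ↦ Σᵢⱼ (w vᵢⱼ)ᵢⱼ`; if it kills all these sums
then, by polarization in `β`, every `vᵢⱼ` lies in `X⊥`, so it kills `X⊥⊥` as well. Hence `X⊥⊥` lies in the pointwise closure of the sums of
compressions, and so in `Y`. -/

section
open scoped ComplexOrder
variable {V : Type*} [AddCommGroup V] [Module ℂ V]

@[simp]
lemma conjPt_apply {p n : ℕ} (A : Matrix (Fin p) (Fin n) ℂ) (x : NCPt V p) (a : V) :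
    conjPt A x a = Aᴴ * x a * A := rfl

lemma conjPt_smul_left {p n : ℕ} (s : ℂ) (A : Matrix (Fin p) (Fin n) ℂ) (x : NCPt V p) :
    conjPt (s • A) x = (star s * s) • conjPt A x := by
  refine LinearMap.ext fun a => ?_
  simp only [conjPt_apply, conjTranspose_smul, Matrix.smul_mul, Matrix.mul_smul, smul_smul,
    LinearMap.smul_apply, mul_comm s]

lemma conjPt_smul_right {p n : ℕ} (A : Matrix (Fin p) (Fin n) ℂ) (c : ℂ) (x : NCPt V p) :
    conjPt A (c • x) = c • conjPt A x := by
  refine LinearMap.ext fun a => ?_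
  simp only [conjPt_apply, LinearMap.smul_apply, Matrix.smul_mul, Matrix.mul_smul]

lemma conjPt_zero_right {p n : ℕ} (A : Matrix (Fin p) (Fin n) ℂ) :
    conjPt A (0 : NCPt V p) = 0 := by
  simpa using conjPt_smul_right A 0 (0 : NCPt V p)

lemma ncCombo_apply {n k : ℕ} (ns : Fin k → ℕ) (xs : ∀ i, NCPt V (ns i))
    (αs : ∀ i, Matrix (Fin (ns i)) (Fin n) ℂ) (a : V) :
    ncCombo ns xs αs a = ∑ i, (αs i)ᴴ * xs i a * αs i := by
  simp [ncCombo]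

lemma continuous_apply_lmTop (n : ℕ) (a : V) :
    @Continuous _ _ (lmTop V n) _ (fun z : NCPt V n => z a) :=
  letI := lmTop V n
  (continuous_apply a).comp continuous_induced_dom

lemma mem_of_isClosed_of_forall_finset_eqOn {n : ℕ} {S : Set (NCPt V n)}
    (hS : @IsClosed _ (lmTop V n) S) {z : NCPt V n}
    (h : ∀ F : Finset V, ∃ w ∈ S, ∀ a ∈ F, w a = z a) : z ∈ S := by
  let _ := lmTop V n
  by_contra hz
  obtain ⟨O, hO, hOS⟩ := isOpen_induced_iff.mp hS.isOpen_compl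
  have hzO : z ∈ (fun f : NCPt V n => (f : V → Matrix (Fin n) (Fin n) ℂ)) ⁻¹' O := by
    rw [hOS]; exact hz
  obtain ⟨F, u, hu, hFu⟩ := isOpen_pi_iff.mp hO _ hzO
  obtain ⟨w, hwS, hwz⟩ := h F
  have hwO : w ∈ (fun f : NCPt V n => (f : V → Matrix (Fin n) (Fin n) ℂ)) ⁻¹' O :=
    hFu fun a ha => show w a ∈ u a by rw [hwz a ha]; exact (hu a ha).2
  rw [hOS] at hwO
  exact hwO hwS

/-- `X⊥ ⊆ A(K)`. -/
def perp (X : ∀ n : ℕ, Set (NCPt V n)) : Submodule ℂ V where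
  carrier := {a | ∀ m, ∀ y ∈ X m, y a = 0}
  add_mem' ha hb m y hy := by simp [ha m y hy, hb m y hy]
  zero_mem' _ _ _ := map_zero _
  smul_mem' c a ha m y hy := by simp [ha m y hy]

/-- `X⊥⊥` at level `m`, taken in all of `Mₘ(A(K)*)` rather than in `Kₘ`. -/
def perpPerp (X : ∀ n : ℕ, Set (NCPt V n)) (m : ℕ) : Submodule ℂ (NCPt V m) where
  carrier := {z | ∀ a ∈ perp X, z a = 0}
  add_mem' hz hw a ha := by simp [hz a ha, hw a ha]
  zero_mem' _ _ := rfl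
  smul_mem' c z hz a ha := by simp [hz a ha]

lemma isClosed_perpPerp (X : ∀ n : ℕ, Set (NCPt V n)) (m : ℕ) :
    @IsClosed _ (lmTop V m) (perpPerp X m : Set (NCPt V m)) := by
  let _ := lmTop V m
  have : (perpPerp X m : Set (NCPt V m)) = ⋂ a ∈ perp X, {z | z a = 0} := by
    ext z
    simp only [SetLike.mem_coe, Set.mem_iInter, Set.mem_ofPred_eq]
    rfl
  rw [this]
  exact isClosed_biInter fun a _ => isClosed_eq (continuous_apply_lmTop m a) continuous_const

lemma closedUnderNCCombos_perpPerp (X : ∀ n : ℕ, Set (NCPt V n)) :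
    ClosedUnderNCCombos fun m => (perpPerp X m : Set (NCPt V m)) := by
  intro n k ns xs αs hxs _ a ha
  rw [ncCombo_apply]
  exact Finset.sum_eq_zero fun i _ => by rw [hxs i a ha, Matrix.mul_zero, Matrix.zero_mul]

lemma ncClosedConvexHull_span_subset_perpPerp (X : ∀ n : ℕ, Set (NCPt V n)) (n : ℕ) :
    ncClosedConvexHull (fun m => (Submodule.span ℂ (X m) : Set (NCPt V m))) n ⊆ perpPerp X n :=
  fun _ hx => hx (fun m => perpPerp X m) (fun m => Submodule.span_le.mpr fun y hy _ ha => ha m y hy)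
    (isClosed_perpPerp X) (closedUnderNCCombos_perpPerp X)

open scoped MatrixOrder Matrix.Norms.L2Operator in
lemma Matrix.PosSemidef.exists_conjTranspose_mul_self_add_smul_eq_one {n : ℕ}
    {M : Matrix (Fin n) (Fin n) ℂ} (hM : M.PosSemidef) :
    ∃ s : ℂ, s ≠ 0 ∧ ∃ B : Matrix (Fin n) (Fin n) ℂ, Bᴴ * B + (star s * s) • M = 1 := by
  set s : ℝ := (‖M‖ + 1)⁻¹ with hs
  have hs0 : 0 < s := by positivity
  have hle : (s * s) • M ≤ 1 :=
    calc (s * s) • M ≤ algebraMap ℝ _ ‖(s * s) • M‖ :=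
          ((IsSelfAdjoint.all (s * s)).smul hM.isHermitian.isSelfAdjoint).le_algebraMap_norm_self
      _ ≤ algebraMap ℝ _ 1 := by
          gcongr
          rw [norm_smul, Real.norm_of_nonneg (by positivity), hs]
          field_simp
          nlinarith [norm_nonneg M]
      _ = 1 := map_one _
  obtain ⟨B, hB⟩ := CStarAlgebra.nonneg_iff_eq_star_mul_self.mp (sub_nonneg.mpr hle)
  refine ⟨s, by exact_mod_cast hs0.ne', B, ?_⟩
  rw [← star_eq_conjTranspose, ← hB, Complex.star_def, Complex.conj_ofReal, ← Complex.ofReal_mul,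
    Complex.coe_smul, sub_add_cancel]

def compressions (X : ∀ n : ℕ, Set (NCPt V n)) (n : ℕ) : Set (NCPt V n) :=
  {z | ∃ (m : ℕ) (β : Matrix (Fin m) (Fin n) ℂ), ∃ y ∈ X m, conjPt β y = z}

/-- Padding with the point `0` (weighted by a square root of `1 - |s|² Σ βᵢ* βᵢ`) turns a sum
of compressions into an nc convex combination. -/
lemma ClosedUnderNCCombos.sum_conjPt_mem {Y : ∀ n : ℕ, Set (NCPt V n)}
    (hY : ClosedUnderNCCombos Y) {P : ∀ n : ℕ, Submodule ℂ (NCPt V n)}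
    (hPY : ∀ m, (P m : Set (NCPt V m)) ⊆ Y m) {n k : ℕ} (ms : Fin k → ℕ)
    (ys : ∀ i, NCPt V (ms i)) (βs : ∀ i, Matrix (Fin (ms i)) (Fin n) ℂ)
    (hys : ∀ i, ys i ∈ P (ms i)) :
    ∑ i, conjPt (βs i) (ys i) ∈ Y n := by
  have hM : (∑ i, (βs i)ᴴ * βs i).PosSemidef :=
    Matrix.posSemidef_sum _ fun i _ => Matrix.posSemidef_conjTranspose_mul_self _
  obtain ⟨s, hs, B, hB⟩ := hM.exists_conjTranspose_mul_self_add_smul_eq_one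
  have hss : star s * s ≠ 0 := mul_ne_zero (star_ne_zero.mpr hs) hs
  let ns : Fin (k + 1) → ℕ := Fin.cons n ms
  let xs : ∀ i, NCPt V (ns i) := Fin.cons (0 : NCPt V n) fun i => (star s * s)⁻¹ • ys i
  let αs : ∀ i, Matrix (Fin (ns i)) (Fin n) ℂ := Fin.cons B fun i => s • βs i
  have hxs : ∀ i, xs i ∈ Y (ns i) := Fin.cases (hPY n (P n).zero_mem)
    fun i => hPY _ ((P (ms i)).smul_mem _ (hys i))
  have hαs : ∑ i, (αs i)ᴴ * αs i = 1 := by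
    rw [Fin.sum_univ_succ]
    change Bᴴ * B + ∑ i : Fin k, (s • βs i)ᴴ * (s • βs i) = 1
    simpa only [conjTranspose_smul, Matrix.smul_mul, Matrix.mul_smul, smul_smul, mul_comm s,
      ← Finset.smul_sum] using hB
  convert hY n (k + 1) ns xs αs hxs hαs using 1
  rw [ncCombo, Fin.sum_univ_succ]
  change _ = conjPt B 0 + ∑ i : Fin k, conjPt (s • βs i) ((star s * s)⁻¹ • ys i)
  simp only [conjPt_zero_right, conjPt_smul_left, conjPt_smul_right, smul_smul,
    inv_mul_cancel₀ hss, one_smul, zero_add]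

lemma span_compressions_subset {X Y : ∀ n : ℕ, Set (NCPt V n)}
    (hXY : ∀ m, (Submodule.span ℂ (X m) : Set (NCPt V m)) ⊆ Y m) (hY : ClosedUnderNCCombos Y)
    (n : ℕ) : (Submodule.span ℂ (compressions X n) : Set (NCPt V n)) ⊆ Y n := by
  intro x hx
  obtain ⟨k, f, z, rfl⟩ := Submodule.mem_span_set'.mp hx
  choose ms βs ys hys hz using fun i => (z i).2
  simp only [← hz, ← conjPt_smul_right]
  exact hY.sum_conjPt_mem hXY ms _ βs fun i =>
    Submodule.smul_mem _ _ (Submodule.subset_span (hys i))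

lemma LinearMap.IsAlt.sesq_eq_zero {M : Type*} [AddCommGroup M] [Module ℂ M]
    {B : M →ₗ⋆[ℂ] M →ₗ[ℂ] ℂ} (hB : B.IsAlt) : B = 0 := by
  refine LinearMap.ext₂ fun x y => ?_
  have h₁ := hB.neg x y
  have h₂ := hB.neg x (Complex.I • y)
  simp only [LinearMap.map_smulₛₗ, LinearMap.smul_apply, smul_eq_mul, RingHom.id_apply,
    Complex.conj_I] at h₂
  show B x y = 0
  linear_combination
    (-1 / 2 : ℂ) * h₁ + (Complex.I / 2) * h₂ + ((B x y - B y x) / 2) * Complex.I_sq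

lemma apply_eq_zero_of_sum_conjPt_apply_eq_zero {p n : ℕ} (y : NCPt V p) (v : Fin n → Fin n → V)
    (h : ∀ β : Matrix (Fin p) (Fin n) ℂ, ∑ i, ∑ j, conjPt β y (v i j) i j = 0) (i j : Fin n) :
    y (v i j) = 0 := by
  let B : Matrix (Fin p) (Fin n) ℂ →ₗ⋆[ℂ] Matrix (Fin p) (Fin n) ℂ →ₗ[ℂ] ℂ :=
    LinearMap.mk₂'ₛₗ (starRingEnd ℂ) (RingHom.id ℂ)
      (fun β γ => ∑ i, ∑ j, (βᴴ * y (v i j) * γ) i j)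
      (fun _ _ _ => by simp [Matrix.add_mul, Finset.sum_add_distrib])
      (fun _ _ _ => by simp [Finset.mul_sum])
      (fun _ _ _ => by simp [Matrix.mul_add, Finset.sum_add_distrib])
      (fun _ _ _ => by simp [Finset.mul_sum])
  have hB : B = 0 := LinearMap.IsAlt.sesq_eq_zero h
  ext s t
  simpa [B, Matrix.single_apply, ite_and] using
    LinearMap.congr_fun₂ hB (single s i 1) (single t j 1)

lemma exists_dual_coord_eq_sum (F : Finset V) {n : ℕ}
    (g : Module.Dual ℂ (F × Fin n × Fin n → ℂ)) :
    ∃ v : Fin n → Fin n → V, ∀ w : NCPt V n,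
      g (fun q => w q.1 q.2.1 q.2.2) = ∑ i, ∑ j, w (v i j) i j := by
  classical
  refine ⟨fun i j => ∑ a : F, g (fun q => if (a, i, j) = q then 1 else 0) • (a : V), fun w => ?_⟩
  rw [LinearMap.pi_apply_eq_sum_univ g]
  simp only [Fintype.sum_prod_type, map_sum, map_smul, Matrix.sum_apply, Matrix.smul_apply,
    smul_eq_mul]
  rw [Finset.sum_comm]
  refine Finset.sum_congr rfl fun i _ => ?_
  rw [Finset.sum_comm]
  exact Finset.sum_congr rfl fun j _ => Finset.sum_congr rfl fun a _ => mul_comm _ _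

lemma exists_mem_span_compressions_eqOn (X : ∀ n : ℕ, Set (NCPt V n)) {n : ℕ} {z : NCPt V n}
    (hz : z ∈ perpPerp X n) (F : Finset V) :
    ∃ w ∈ Submodule.span ℂ (compressions X n), ∀ a ∈ F, w a = z a := by
  let coord : NCPt V n →ₗ[ℂ] (F × Fin n × Fin n → ℂ) :=
    { toFun := fun w q => w q.1 q.2.1 q.2.2
      map_add' := fun _ _ => rfl
      map_smul' := fun _ _ => rfl }
  by_contra! h
  have hz' : coord z ∉ (Submodule.span ℂ (compressions X n)).map coord := by
    rintro ⟨w, hw, hwz⟩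
    obtain ⟨a, ha, hne⟩ := h w hw
    exact hne (Matrix.ext fun i j => congrFun hwz (⟨a, ha⟩, i, j))
  obtain ⟨g, hgz, hg⟩ := Submodule.exists_dual_map_eq_bot_of_notMem hz' inferInstance
  have hg' : ∀ w ∈ Submodule.span ℂ (compressions X n), g (coord w) = 0 := fun w hw =>
    (Submodule.mem_bot ℂ).mp (hg ▸ Submodule.mem_map_of_mem (Submodule.mem_map_of_mem hw))
  obtain ⟨v, hv⟩ := exists_dual_coord_eq_sum F g
  have hperp : ∀ i j, v i j ∈ perp X := fun i j m y hy =>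
    apply_eq_zero_of_sum_conjPt_apply_eq_zero y v (fun β => (hv _).symm.trans
      (hg' _ (Submodule.subset_span ⟨m, β, y, hy, rfl⟩))) i j
  exact hgz ((hv z).trans (by simp [hz _ (hperp _ _)]))

end

theorem stmt_9_general {V : Type*} [AddCommGroup V] [Module ℂ V]
    (K : ∀ n : ℕ, Set (NCPt V n))
    (X : ∀ n : ℕ, Set (NCPt V n)) (n : ℕ) :
    {x ∈ K n | ∀ a : V, (∀ (m : ℕ), ∀ y ∈ X m, y a = 0) → x a = 0}
      = ncClosedConvexHull (fun m => (Submodule.span ℂ (X m) : Set (NCPt V m))) n ∩ K n := by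
  ext x
  refine ⟨fun ⟨hxK, hx⟩ => ⟨fun Y hXY hYcl hYco => ?_, hxK⟩,
    fun ⟨hx, hxK⟩ => ⟨hxK, ncClosedConvexHull_span_subset_perpPerp X n hx⟩⟩
  refine mem_of_isClosed_of_forall_finset_eqOn (hYcl n) fun F => ?_
  obtain ⟨w, hw, hwx⟩ := exists_mem_span_compressions_eqOn X (z := x) hx F
  exact ⟨w, span_compressions_subset hXY hYco n hw, hwx⟩

/-- `X⊥⊥ = Y ∩ K`, where `Y` is the closed nc convex hull of the spans of the `Xₙ`. -/
theorem stmt_9 {V : Type*} [AddCommGroup V] [Module ℂ V]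
    (K : ∀ n : ℕ, Set (NCPt V n)) (hK : IsCompactNCConvex K)
    (X : ∀ n : ℕ, Set (NCPt V n)) (hX : ∀ n, X n ⊆ K n) (n : ℕ) :
    {x ∈ K n | ∀ a : V, (∀ (m : ℕ), ∀ y ∈ X m, y a = 0) → x a = 0}
      = ncClosedConvexHull (fun m => (Submodule.span ℂ (X m) : Set (NCPt V m))) n ∩ K n :=
  stmt_9_general K X n
end
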